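/- arXiv:2201.10209 — 3 statements merged into one kernel-verified Lean document; each statement's English description precedes it below -/
import Mathlib

section
/- Let a, b, c ∈ ℝ with c > 0 and β > 0, and Q(x,y) = (1/2)(ax² + by² + 2cxy). Suppose (x⃗; y⃗) with x₁ ≥ ⋯ ≥ x_r ≥ 0, y₁,…,y_r ≥ 0, ∑x_i = ρ, ∑y_i = 1−ρ maximizes F(x⃗;y⃗) = ∑_i (−x_i log x_i − y_i log y_i + βQ(x_i,y_i)) over all such configurations. Then y₁ ≥ y₂ ≥ ⋯ ≥ y_r. -/
/-- The free-energy functional F of the two-block interchange model. -/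
noncomputable def Fab (r : ℕ) (a b c β : ℝ) (x y : Fin r → ℝ) : ℝ :=
  ∑ i, (-(x i * Real.log (x i)) - y i * Real.log (y i) +
    β * ((a * x i ^ 2 + b * y i ^ 2 + 2 * c * x i * y i) / 2))

/-!
If `x i > x j` while `y i < y j`, swapping `y i` and `y j` raises the interaction `β c ∑ x k y k`
by `β c (x i - x j) (y j - y i) > 0` and leaves everything else unchanged. If `x i = x j`, the
swap gives no gain, so one perturbs `x` instead: since `-u log u` has infinite slope at `0`, a
maximizer has all `x k > 0`; then moving mass from `x i` to `x j` is admissible in both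
directions, and the resulting first-order condition
`-log (x i) + β (a x i + c y i) = -log (x j) + β (a x j + c y j)` forces `y i = y j`.
-/

open Real Finset

def scaledSimplex (ι : Type*) [Fintype ι] (m : ℝ) : Set (ι → ℝ) :=
  {x | (∀ k, 0 ≤ x k) ∧ ∑ k, x k = m}

def transfer {ι : Type*} [DecidableEq ι] (x : ι → ℝ) (i j : ι) (s : ℝ) : ι → ℝ :=
  x - Pi.single i s + Pi.single j s

section Transfer

variable {ι : Type*} [DecidableEq ι] {x : ι → ℝ} {i j : ι} {s : ℝ}

theorem transfer_apply_left (hij : i ≠ j) : transfer x i j s i = x i - s := by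
  simp [transfer, hij]

theorem transfer_apply_right (hij : i ≠ j) : transfer x i j s j = x j + s := by
  simp [transfer, hij.symm]

theorem transfer_apply_of_ne {k : ι} (hki : k ≠ i) (hkj : k ≠ j) :
    transfer x i j s k = x k := by
  simp [transfer, hki, hkj]

theorem transfer_mem_scaledSimplex [Fintype ι] {m : ℝ} (hx : x ∈ scaledSimplex ι m)
    (hij : i ≠ j) (hsi : s ≤ x i) (hsj : -x j ≤ s) :
    transfer x i j s ∈ scaledSimplex ι m := by
  refine ⟨fun k => ?_, ?_⟩
  · by_cases hki : k = i
    · subst hki; rw [transfer_apply_left hij]; linarith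
    by_cases hkj : k = j
    · subst hkj; rw [transfer_apply_right hij]; linarith
    rw [transfer_apply_of_ne hki hkj]; exact hx.1 k
  · simp [transfer, sum_add_distrib, sum_sub_distrib, hx.2]

end Transfer

noncomputable def fabTerm (a b c β u v : ℝ) : ℝ :=
  negMulLog u + negMulLog v + β * ((a * u ^ 2 + b * v ^ 2 + 2 * c * u * v) / 2)

section Fab

variable {r : ℕ} {a b c β : ℝ}

theorem Fab_eq_sum_fabTerm (x y : Fin r → ℝ) :
    Fab r a b c β x y = ∑ k, fabTerm a b c β (x k) (y k) := by
  simp only [Fab, fabTerm, negMulLog, neg_mul, sub_eq_add_neg]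

theorem Fab_sub_Fab_of_eq_off_pair {x y x' y' : Fin r → ℝ} {i j : Fin r} (hij : i ≠ j)
    (hx : ∀ k, k ≠ i → k ≠ j → x' k = x k) (hy : ∀ k, k ≠ i → k ≠ j → y' k = y k) :
    Fab r a b c β x' y' - Fab r a b c β x y =
      (fabTerm a b c β (x' i) (y' i) - fabTerm a b c β (x i) (y i)) +
        (fabTerm a b c β (x' j) (y' j) - fabTerm a b c β (x j) (y j)) := by
  rw [Fab_eq_sum_fabTerm, Fab_eq_sum_fabTerm, ← sum_sub_distrib]
  exact Fintype.sum_eq_add i j hij fun k ⟨hki, hkj⟩ => by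
    rw [hx k hki hkj, hy k hki hkj, sub_self]

theorem Fab_transfer_sub_Fab (x y : Fin r → ℝ) {i j : Fin r} (hij : i ≠ j) (s : ℝ) :
    Fab r a b c β (transfer x i j s) y - Fab r a b c β x y =
      (fabTerm a b c β (x i - s) (y i) - fabTerm a b c β (x i) (y i)) +
        (fabTerm a b c β (x j + s) (y j) - fabTerm a b c β (x j) (y j)) := by
  rw [Fab_sub_Fab_of_eq_off_pair hij (fun k => transfer_apply_of_ne) (fun _ _ _ => rfl),
    transfer_apply_left hij, transfer_apply_right hij]

theorem Fab_comp_swap_sub_Fab (x y : Fin r → ℝ) {i j : Fin r} (hij : i ≠ j) :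
    Fab r a b c β x (y ∘ Equiv.swap i j) - Fab r a b c β x y =
      β * c * (x i - x j) * (y j - y i) := by
  rw [Fab_sub_Fab_of_eq_off_pair hij (fun _ _ _ => rfl)
    (fun k hki hkj => by simp [Equiv.swap_apply_of_ne_of_ne hki hkj])]
  simp only [Function.comp_apply, Equiv.swap_apply_left, Equiv.swap_apply_right, fabTerm]
  ring

theorem hasDerivAt_fabTerm_left {u : ℝ} (hu : u ≠ 0) (v : ℝ) :
    HasDerivAt (fun u => fabTerm a b c β u v) (-log u - 1 + β * (a * u + c * v)) u := by
  have hpoly := (((hasDerivAt_negMulLog hu).add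
    ((hasDerivAt_pow 2 u).const_mul (β * a / 2))).add
    ((hasDerivAt_id u).const_mul (β * c * v))).add_const (negMulLog v + β * b * v ^ 2 / 2)
  rw [show (fun w => fabTerm a b c β w v) = fun w => negMulLog w + β * a / 2 * w ^ 2 +
      β * c * v * w + (negMulLog v + β * b * v ^ 2 / 2) from funext fun w => by
    simp only [fabTerm]; ring]
  exact hpoly.congr_deriv (by norm_num; ring)

end Fab

theorem mul_log_half_le_negMulLog_sub_sub {u ε : ℝ} (hε : 0 < ε) (hεu : ε ≤ u / 2) :
    ε * log (u / 2) ≤ negMulLog (u - ε) - negMulLog u := by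
  have hlog₁ : log (u / 2) ≤ log (u - ε) := log_le_log (by linarith) (by linarith)
  have hlog₂ : log (u - ε) ≤ log u := log_le_log (by linarith) (by linarith)
  calc ε * log (u / 2) ≤ ε * log (u - ε) := by gcongr
    _ ≤ ε * log (u - ε) + u * (log u - log (u - ε)) := by nlinarith
    _ = negMulLog (u - ε) - negMulLog u := by simp only [negMulLog]; ring

theorem exists_mul_lt_negMulLog (K : ℝ) {δ : ℝ} (hδ : 0 < δ) :
    ∃ ε, 0 < ε ∧ ε ≤ δ ∧ K * ε < negMulLog ε := by
  refine ⟨min δ (exp (-K - 1)), lt_min hδ (exp_pos _), min_le_left _ _, ?_⟩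
  set ε := min δ (exp (-K - 1))
  have hε : 0 < ε := lt_min hδ (exp_pos _)
  have hlog : log ε ≤ -K - 1 := (log_le_iff_le_exp hε).2 (min_le_right _ _)
  rw [negMulLog, neg_mul]
  nlinarith

section Maximizer

variable {r : ℕ} {a b c β m : ℝ} {x y : Fin r → ℝ}

theorem pos_of_isMaxOn_Fab_left (hm : 0 < m) (hx : x ∈ scaledSimplex (Fin r) m)
    (hmax : IsMaxOn (fun x' => Fab r a b c β x' y) (scaledSimplex (Fin r) m) x) (k : Fin r) :
    0 < x k := by
  by_contra! hk
  have hxk : x k = 0 := le_antisymm hk (hx.1 k)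
  obtain ⟨l, hl⟩ : ∃ l, 0 < x l := by
    by_contra! h
    linarith [sum_nonpos (s := univ) fun l _ => h l, hx.2]
  have hlk : l ≠ k := by rintro rfl; linarith
  set K := -log (x l / 2) + |β * a| * x l + β * c * (y l - y k)
  obtain ⟨ε, hε, hεl, hK⟩ := exists_mul_lt_negMulLog K (half_pos hl)
  have hquad : -(|β * a| * x l) ≤ β * a * (ε - x l) := by
    have : |β * a * (ε - x l)| ≤ |β * a| * x l := by
      rw [abs_mul, abs_of_nonpos (by linarith : ε - x l ≤ 0)]
      exact mul_le_mul_of_nonneg_left (by linarith) (abs_nonneg _)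
    linarith [neg_abs_le (β * a * (ε - x l))]
  have hgain : negMulLog ε - K * ε ≤
      Fab r a b c β (transfer x l k ε) y - Fab r a b c β x y := by
    have hent := mul_log_half_le_negMulLog_sub_sub hε hεl
    rw [Fab_transfer_sub_Fab x y hlk, hxk]
    simp only [fabTerm, zero_add, negMulLog_zero]
    linarith [mul_le_mul_of_nonneg_left hquad hε.le]
  have hle : Fab r a b c β (transfer x l k ε) y ≤ Fab r a b c β x y :=
    hmax (transfer_mem_scaledSimplex hx hlk (by linarith) (by linarith))
  linarith

theorem marginal_eq_of_isMaxOn_Fab_left (hx : x ∈ scaledSimplex (Fin r) m)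
    (hmax : IsMaxOn (fun x' => Fab r a b c β x' y) (scaledSimplex (Fin r) m) x)
    {i j : Fin r} (hij : i ≠ j) (hi : 0 < x i) (hj : 0 < x j) :
    -log (x i) + β * (a * x i + c * y i) = -log (x j) + β * (a * x j + c * y j) := by
  set φ : ℝ → ℝ := fun s =>
    fabTerm a b c β (x i - s) (y i) + fabTerm a b c β (x j + s) (y j)
  have hderiv : HasDerivAt φ (-(-log (x i) - 1 + β * (a * x i + c * y i)) +
      (-log (x j) - 1 + β * (a * x j + c * y j))) 0 := by
    refine HasDerivAt.add ?_ ?_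
    · exact HasDerivAt.comp_const_sub (f := fun u => fabTerm a b c β u (y i)) _ _
        (by simpa using hasDerivAt_fabTerm_left hi.ne' (y i))
    · exact HasDerivAt.comp_const_add (f := fun u => fabTerm a b c β u (y j)) _ _
        (by simpa using hasDerivAt_fabTerm_left hj.ne' (y j))
  have hlocal : IsLocalMax φ 0 := by
    filter_upwards [Ioo_mem_nhds (neg_lt_zero.2 hj) hi] with s hs
    have hle : Fab r a b c β (transfer x i j s) y ≤ Fab r a b c β x y :=
      hmax (transfer_mem_scaledSimplex hx hij hs.2.le hs.1.le)
    have hdiff := Fab_transfer_sub_Fab (a := a) (b := b) (c := c) (β := β) x y hij s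
    simp only [φ, sub_zero, add_zero]
    linarith
  linarith [hlocal.hasDerivAt_eq_zero hderiv]

theorem le_of_lt_of_isMaxOn_Fab_right (hβc : 0 < β * c)
    (hmax : IsMaxOn (fun y' => Fab r a b c β x y') (scaledSimplex (Fin r) m) y)
    (hy : y ∈ scaledSimplex (Fin r) m) {i j : Fin r} (hx : x j < x i) : y j ≤ y i := by
  by_contra! hlt
  have hij : i ≠ j := by rintro rfl; exact hx.false
  have hswap : y ∘ Equiv.swap i j ∈ scaledSimplex (Fin r) m :=
    ⟨fun k => hy.1 _, by rw [← hy.2]; exact Equiv.sum_comp (Equiv.swap i j) y⟩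
  have hle : Fab r a b c β x (y ∘ Equiv.swap i j) ≤ Fab r a b c β x y := hmax hswap
  have hgain := Fab_comp_swap_sub_Fab (a := a) (b := b) (c := c) (β := β) x y hij
  nlinarith [mul_pos (mul_pos hβc (sub_pos.2 hx)) (sub_pos.2 hlt)]

end Maximizer

theorem maximizer_y_decreasing_general (r : ℕ) (ρ a b c β : ℝ)
    (hρ0 : 0 < ρ) (hc : 0 < c) (hβ : 0 < β)
    (x y : Fin r → ℝ) (hx0 : ∀ i, 0 ≤ x i) (hy0 : ∀ i, 0 ≤ y i)
    (hxs : ∑ i, x i = ρ) (hys : ∑ i, y i = 1 - ρ)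
    (hxdec : Antitone x)
    (hmax : ∀ x' y' : Fin r → ℝ, (∀ i, 0 ≤ x' i) → (∀ i, 0 ≤ y' i) →
      ∑ i, x' i = ρ → ∑ i, y' i = 1 - ρ → Fab r a b c β x' y' ≤ Fab r a b c β x y) :
    Antitone y := by
  have hx : x ∈ scaledSimplex (Fin r) ρ := ⟨hx0, hxs⟩
  have hy : y ∈ scaledSimplex (Fin r) (1 - ρ) := ⟨hy0, hys⟩
  have hxmax : IsMaxOn (fun x' => Fab r a b c β x' y) (scaledSimplex (Fin r) ρ) x :=
    fun x' hx' => hmax x' y hx'.1 hy0 hx'.2 hys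
  have hymax : IsMaxOn (fun y' => Fab r a b c β x y') (scaledSimplex (Fin r) (1 - ρ)) y :=
    fun y' hy' => hmax x y' hx0 hy'.1 hxs hy'.2
  intro i j hij
  rcases (hxdec hij).lt_or_eq with hlt | heq
  · exact le_of_lt_of_isMaxOn_Fab_right (mul_pos hβ hc) hymax hy hlt
  by_contra! hyij
  have hne : i ≠ j := by rintro rfl; exact hyij.false
  have hpos := pos_of_isMaxOn_Fab_left hρ0 hx hxmax
  have hfoc := marginal_eq_of_isMaxOn_Fab_left hx hxmax hne (hpos i) (hpos j)
  rw [heq] at hfoc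
  have : β * c * (y j - y i) = 0 := by linear_combination -hfoc
  exact (mul_pos (mul_pos hβ hc) (sub_pos.2 hyij)).ne' this

theorem maximizer_y_decreasing (r : ℕ) (hr : 1 ≤ r) (ρ a b c β : ℝ)
    (hρ0 : 0 < ρ) (hρ1 : ρ < 1) (hc : 0 < c) (hβ : 0 < β)
    (x y : Fin r → ℝ) (hx0 : ∀ i, 0 ≤ x i) (hy0 : ∀ i, 0 ≤ y i)
    (hxs : ∑ i, x i = ρ) (hys : ∑ i, y i = 1 - ρ)
    (hxdec : Antitone x)
    (hmax : ∀ x' y' : Fin r → ℝ, (∀ i, 0 ≤ x' i) → (∀ i, 0 ≤ y' i) →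
      ∑ i, x' i = ρ → ∑ i, y' i = 1 - ρ → Fab r a b c β x' y' ≤ Fab r a b c β x y) :
    Antitone y :=
  maximizer_y_decreasing_general r ρ a b c β hρ0 hc hβ x y hx0 hy0 hxs hys hxdec hmax
end

section
/- If Q(x,y) = (1/2)(ax² + by² + 2cxy) is negative semidefinite (equivalently a ≤ 0, b ≤ 0, ab ≥ c²), then for every β > 0 the function F(x⃗;y⃗) = ∑_{i=1}^r (−x_i log x_i − y_i log y_i + βQ(x_i,y_i)) attains its maximum over Ω uniquely at the point ω₀ = (ρ/r,…,ρ/r; (1−ρ)/r,…,(1−ρ)/r). -/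
open Finset Real

section Entropy

variable {ι : Type*} [Fintype ι] [Nonempty ι] {t : ι → ℝ}

theorem sum_negMulLog_le (ht : ∀ i, 0 ≤ t i) :
    ∑ i, negMulLog (t i) ≤ Fintype.card ι * negMulLog ((∑ i, t i) / Fintype.card ι) := by
  have hcard : (0 : ℝ) < Fintype.card ι := by exact_mod_cast Fintype.card_pos
  have hjensen := concaveOn_negMulLog.le_map_sum (t := univ) (w := fun _ => (Fintype.card ι : ℝ)⁻¹)
    (fun _ _ => by positivity) (by simp) (fun i _ => ht i)
  simp only [smul_eq_mul, ← mul_sum] at hjensen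
  rw [inv_mul_eq_div, inv_mul_eq_div, div_le_iff₀ hcard] at hjensen
  linarith

theorem eq_const_of_sum_negMulLog_eq (ht : ∀ i, 0 ≤ t i)
    (h : ∑ i, negMulLog (t i) = Fintype.card ι * negMulLog ((∑ i, t i) / Fintype.card ι)) :
    t = fun _ => (∑ i, t i) / Fintype.card ι := by
  have hcard : (Fintype.card ι : ℝ) ≠ 0 := by exact_mod_cast Fintype.card_ne_zero
  have hjensen : negMulLog (∑ i, (Fintype.card ι : ℝ)⁻¹ • t i) =
      ∑ i, (Fintype.card ι : ℝ)⁻¹ • negMulLog (t i) := by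
    simp only [smul_eq_mul, ← mul_sum, h]
    field_simp
  have hall := (strictConcaveOn_negMulLog.map_sum_eq_iff_of_pos (fun _ _ => by positivity)
    (by simp) (fun i _ => ht i)).mp hjensen
  funext j
  have hsum : ∑ i, t i = Fintype.card ι * t j := by
    rw [sum_congr rfl fun i _ => hall (mem_univ i) (mem_univ j)]
    simp
  rw [hsum]
  field_simp

end Entropy

noncomputable def quadForm (a b c u v : ℝ) : ℝ := (a * u ^ 2 + b * v ^ 2 + 2 * c * u * v) / 2

lemma quadForm_add (a b c u v u' v' : ℝ) :
    quadForm a b c (u + u') (v + v') =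
      quadForm a b c u v + ((a * u + c * v) * u' + (b * v + c * u) * v') +
        quadForm a b c u' v' := by
  unfold quadForm
  ring

theorem sum_quadForm_le {ι : Type*} [Fintype ι] [Nonempty ι] {a b c : ℝ}
    (hQ : ∀ u v, quadForm a b c u v ≤ 0) (x y : ι → ℝ) :
    ∑ i, quadForm a b c (x i) (y i) ≤
      Fintype.card ι *
        quadForm a b c ((∑ i, x i) / Fintype.card ι) ((∑ i, y i) / Fintype.card ι) := by
  set m := (∑ i, x i) / Fintype.card ι
  set n := (∑ i, y i) / Fintype.card ι
  have hcard : (Fintype.card ι : ℝ) ≠ 0 := by exact_mod_cast Fintype.card_ne_zero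
  have hdx : ∑ i, (x i - m) = 0 := by simp [m, sum_sub_distrib]; field_simp; ring
  have hdy : ∑ i, (y i - n) = 0 := by simp [n, sum_sub_distrib]; field_simp; ring
  calc ∑ i, quadForm a b c (x i) (y i)
      = ∑ i, (quadForm a b c m n + ((a * m + c * n) * (x i - m) + (b * n + c * m) * (y i - n)) +
          quadForm a b c (x i - m) (y i - n)) := by
        refine sum_congr rfl fun i _ => ?_
        rw [← quadForm_add, add_sub_cancel, add_sub_cancel]
    _ = Fintype.card ι * quadForm a b c m n + ∑ i, quadForm a b c (x i - m) (y i - n) := by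
        simp only [sum_add_distrib, ← mul_sum, hdx, hdy, sum_const, card_univ, nsmul_eq_mul]
        ring
    _ ≤ Fintype.card ι * quadForm a b c m n := by
        linarith [sum_nonpos fun i (_ : i ∈ univ) => hQ (x i - m) (y i - n)]

lemma Fab_eq (r : ℕ) (a b c β : ℝ) (x y : Fin r → ℝ) :
    Fab r a b c β x y = ∑ i, negMulLog (x i) + ∑ i, negMulLog (y i) +
      β * ∑ i, quadForm a b c (x i) (y i) := by
  rw [mul_sum, ← sum_add_distrib, ← sum_add_distrib]
  refine sum_congr rfl fun i _ => ?_
  simp only [negMulLog, quadForm]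
  ring

theorem negSemidef_unique_max_general (r : ℕ) (hr : 2 ≤ r) (ρ a b c β : ℝ)
    (hβ : 0 < β)
    (hQ : ∀ u v : ℝ, (a * u ^ 2 + b * v ^ 2 + 2 * c * u * v) / 2 ≤ 0)
    (x y : Fin r → ℝ) (hx0 : ∀ i, 0 ≤ x i) (hy0 : ∀ i, 0 ≤ y i)
    (hxs : ∑ i, x i = ρ) (hys : ∑ i, y i = 1 - ρ) :
    Fab r a b c β x y ≤ Fab r a b c β (fun _ => ρ / r) (fun _ => (1 - ρ) / r) ∧
      (Fab r a b c β x y = Fab r a b c β (fun _ => ρ / r) (fun _ => (1 - ρ) / r) →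
        x = (fun _ => ρ / r) ∧ y = (fun _ => (1 - ρ) / r)) := by
  have : Nonempty (Fin r) := Fin.pos_iff_nonempty.mp (by omega)
  have hx := sum_negMulLog_le hx0
  have hy := sum_negMulLog_le hy0
  have hq := mul_le_mul_of_nonneg_left (sum_quadForm_le hQ x y) hβ.le
  simp only [Fintype.card_fin, hxs, hys] at hx hy hq
  have hmax : Fab r a b c β (fun _ => ρ / r) (fun _ => (1 - ρ) / r) =
      r * negMulLog (ρ / r) + r * negMulLog ((1 - ρ) / r) +
        β * (r * quadForm a b c (ρ / r) ((1 - ρ) / r)) := by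
    simp [Fab_eq]
  rw [Fab_eq, hmax]
  refine ⟨by linarith, fun heq => ⟨?_, ?_⟩⟩
  · simpa [hxs] using
      eq_const_of_sum_negMulLog_eq hx0 (by simp only [Fintype.card_fin, hxs]; linarith)
  · simpa [hys] using
      eq_const_of_sum_negMulLog_eq hy0 (by simp only [Fintype.card_fin, hys]; linarith)

theorem negSemidef_unique_max (r : ℕ) (hr : 2 ≤ r) (ρ a b c β : ℝ)
    (hρ0 : 0 < ρ) (hρ1 : ρ < 1) (hβ : 0 < β)
    (hQ : ∀ u v : ℝ, (a * u ^ 2 + b * v ^ 2 + 2 * c * u * v) / 2 ≤ 0)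
    (x y : Fin r → ℝ) (hx0 : ∀ i, 0 ≤ x i) (hy0 : ∀ i, 0 ≤ y i)
    (hxs : ∑ i, x i = ρ) (hys : ∑ i, y i = 1 - ρ) :
    Fab r a b c β x y ≤ Fab r a b c β (fun _ => ρ / r) (fun _ => (1 - ρ) / r) ∧
      (Fab r a b c β x y = Fab r a b c β (fun _ => ρ / r) (fun _ => (1 - ρ) / r) →
        x = (fun _ => ρ / r) ∧ y = (fun _ => (1 - ρ) / r)) :=
  negSemidef_unique_max_general r hr ρ a b c β hβ hQ x y hx0 hy0 hxs hys
end

section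
/- Let a, b, c, ρ, ρ', β > 0 be real with ρ, ρ', β > 0 and suppose the quadratic form Q(x,y) = (1/2)(ax² + by² + 2cxy) is not negative semidefinite. Define γ by γ = (ρa + ρ'b − √((ρa − ρ'b)² + 4ρρ'c²)) / (ρρ'(ab − c²)) if ab ≠ c², and γ = 2/(aρ + bρ') if ab = c². Then the form βQ(x,y) − x²/ρ − y²/ρ' is negative semidefinite if and only if β ≤ γ, and negative definite if and only if β < γ. -/
/-!
Write `F = a x² + b y² + 2 c x y`, `W = x² / ρ + y² / ρ'`, `s = ρ a + ρ' b`, `k = ρ ρ' (a b - c²)`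
and `r = √(s² - 4 k)`. The sharp constant in `F ≤ λ W` is the larger root `λ = (s + r) / 2` of
`t² - s t + k`: the form `λ W - F` has nonnegative diagonal and zero discriminant, so it is
positive semidefinite with a nontrivial zero. As the perturbed form is `(β F - 2 W) / 2`, it is
negative semidefinite iff `β λ ≤ 2` and negative definite iff `β λ < 2`, and `λ > 0` because `F`
takes a positive value. Finally `γ = 2 / λ`: for `k ≠ 0` this is `(s - r) / k = 4 / (s + r)`,
from `s² - r² = 4 k`, and for `k = 0` we have `r = s`.
-/

open Real

def binForm (a b c x y : ℝ) : ℝ := a * x ^ 2 + b * y ^ 2 + 2 * c * x * y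

theorem binForm_nonneg {A B C : ℝ} (hA : 0 ≤ A) (hB : 0 ≤ B) (hC : C ^ 2 ≤ A * B) (x y : ℝ) :
    0 ≤ binForm A B C x y := by
  unfold binForm
  have hsum : 0 ≤ (A + B) * (A * x ^ 2 + B * y ^ 2 + 2 * C * x * y) := by
    nlinarith [sq_nonneg (A * x + C * y), sq_nonneg (B * y + C * x),
      mul_nonneg (sub_nonneg.2 hC) (add_nonneg (sq_nonneg x) (sq_nonneg y))]
  rcases (add_nonneg hA hB).eq_or_lt with hAB | hAB
  · have hA0 : A = 0 := by linarith
    have hB0 : B = 0 := by linarith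
    have hC0 : C = 0 := by subst hA0; nlinarith [sq_nonneg C]
    simp [hA0, hB0, hC0]
  · exact nonneg_of_mul_nonneg_right (by linarith) hAB

theorem exists_binForm_eq_zero {A B C : ℝ} (hA : 0 ≤ A) (hC : C ^ 2 = A * B) :
    ∃ x y : ℝ, (x, y) ≠ (0, 0) ∧ binForm A B C x y = 0 := by
  rcases hA.eq_or_lt with rfl | hA
  · exact ⟨1, 0, by simp, by simp [binForm]⟩
  · refine ⟨C, -A, by simp [hA.ne'], ?_⟩
    unfold binForm
    linear_combination (-A) * hC

theorem sq_div_add_sq_div_pos {ρ ρ' x y : ℝ} (hρ : 0 < ρ) (hρ' : 0 < ρ') (hxy : (x, y) ≠ (0, 0)) :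
    0 < x ^ 2 / ρ + y ^ 2 / ρ' := by
  rcases ne_or_eq x 0 with hx | rfl
  · positivity
  · have hy : y ≠ 0 := fun hy => hxy (by rw [hy])
    positivity

theorem mul_mul_sub_binForm (a b c ρ ρ' t x y : ℝ) (hρ : ρ ≠ 0) (hρ' : ρ' ≠ 0) :
    ρ * ρ' * (t * (x ^ 2 / ρ + y ^ 2 / ρ') - binForm a b c x y) =
      binForm (ρ' * (t - ρ * a)) (ρ * (t - ρ' * b)) (-(ρ * ρ' * c)) x y := by
  unfold binForm
  field_simp
  ring

noncomputable def topEigenvalue (a b c ρ ρ' : ℝ) : ℝ :=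
  (ρ * a + ρ' * b + √((ρ * a - ρ' * b) ^ 2 + 4 * ρ * ρ' * c ^ 2)) / 2

section topEigenvalue

variable (a b c : ℝ) {ρ ρ' : ℝ}

theorem sq_sqrt_discr (hρ : 0 < ρ) (hρ' : 0 < ρ') :
    √((ρ * a - ρ' * b) ^ 2 + 4 * ρ * ρ' * c ^ 2) ^ 2 =
      (ρ * a - ρ' * b) ^ 2 + 4 * ρ * ρ' * c ^ 2 :=
  sq_sqrt (by positivity)

theorem topEigenvalue_sub_mul_sub (hρ : 0 < ρ) (hρ' : 0 < ρ') :
    (topEigenvalue a b c ρ ρ' - ρ * a) * (topEigenvalue a b c ρ ρ' - ρ' * b) = ρ * ρ' * c ^ 2 := by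
  unfold topEigenvalue
  linear_combination (1 / 4 : ℝ) * sq_sqrt_discr a b c hρ hρ'

theorem abs_sub_le_sqrt_discr (hρ : 0 < ρ) (hρ' : 0 < ρ') :
    |ρ * a - ρ' * b| ≤ √((ρ * a - ρ' * b) ^ 2 + 4 * ρ * ρ' * c ^ 2) :=
  abs_le_sqrt (by nlinarith [mul_pos hρ hρ', sq_nonneg c])

theorem mul_le_topEigenvalue_left (hρ : 0 < ρ) (hρ' : 0 < ρ') :
    ρ * a ≤ topEigenvalue a b c ρ ρ' := by
  have := abs_sub_le_sqrt_discr a b c hρ hρ'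
  unfold topEigenvalue
  linarith [le_abs_self (ρ * a - ρ' * b)]

theorem mul_le_topEigenvalue_right (hρ : 0 < ρ) (hρ' : 0 < ρ') :
    ρ' * b ≤ topEigenvalue a b c ρ ρ' := by
  have := abs_sub_le_sqrt_discr a b c hρ hρ'
  unfold topEigenvalue
  linarith [neg_abs_le (ρ * a - ρ' * b)]

theorem topEigenvalue_gap_discr (hρ : 0 < ρ) (hρ' : 0 < ρ') :
    (-(ρ * ρ' * c)) ^ 2 =
      ρ' * (topEigenvalue a b c ρ ρ' - ρ * a) * (ρ * (topEigenvalue a b c ρ ρ' - ρ' * b)) := by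
  linear_combination (-(ρ * ρ')) * topEigenvalue_sub_mul_sub a b c hρ hρ'

theorem exists_binForm_eq_topEigenvalue_mul (hρ : 0 < ρ) (hρ' : 0 < ρ') :
    ∃ x y : ℝ, (x, y) ≠ (0, 0) ∧
      binForm a b c x y = topEigenvalue a b c ρ ρ' * (x ^ 2 / ρ + y ^ 2 / ρ') := by
  obtain ⟨x, y, hxy, hgap⟩ := exists_binForm_eq_zero
    (mul_nonneg hρ'.le (sub_nonneg.2 (mul_le_topEigenvalue_left a b c hρ hρ')))
    (topEigenvalue_gap_discr a b c hρ hρ')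
  rw [← mul_mul_sub_binForm a b c ρ ρ' _ x y hρ.ne' hρ'.ne'] at hgap
  refine ⟨x, y, hxy, ?_⟩
  linarith [(mul_eq_zero.1 hgap).resolve_left (mul_pos hρ hρ').ne']

variable {a b c}

theorem binForm_le_topEigenvalue_mul (hρ : 0 < ρ) (hρ' : 0 < ρ') (x y : ℝ) :
    binForm a b c x y ≤ topEigenvalue a b c ρ ρ' * (x ^ 2 / ρ + y ^ 2 / ρ') := by
  have hgap := binForm_nonneg
    (mul_nonneg hρ'.le (sub_nonneg.2 (mul_le_topEigenvalue_left a b c hρ hρ')))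
    (mul_nonneg hρ.le (sub_nonneg.2 (mul_le_topEigenvalue_right a b c hρ hρ')))
    (topEigenvalue_gap_discr a b c hρ hρ').le x y
  rw [← mul_mul_sub_binForm a b c ρ ρ' _ x y hρ.ne' hρ'.ne'] at hgap
  linarith [nonneg_of_mul_nonneg_right hgap (mul_pos hρ hρ')]

theorem topEigenvalue_pos (hρ : 0 < ρ) (hρ' : 0 < ρ') {x y : ℝ} (h : 0 < binForm a b c x y) :
    0 < topEigenvalue a b c ρ ρ' :=
  pos_of_mul_pos_left (h.trans_le (binForm_le_topEigenvalue_mul hρ hρ' x y)) (by positivity)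

theorem forall_mul_binForm_le_iff (hρ : 0 < ρ) (hρ' : 0 < ρ') {β : ℝ} (hβ : 0 ≤ β) (μ : ℝ) :
    (∀ x y : ℝ, β * binForm a b c x y ≤ μ * (x ^ 2 / ρ + y ^ 2 / ρ')) ↔
      β * topEigenvalue a b c ρ ρ' ≤ μ := by
  constructor
  · intro h
    obtain ⟨x, y, hxy, heq⟩ := exists_binForm_eq_topEigenvalue_mul a b c hρ hρ'
    have := h x y
    rw [heq, ← mul_assoc] at this
    exact le_of_mul_le_mul_right this (sq_div_add_sq_div_pos hρ hρ' hxy)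
  · intro h x y
    calc β * binForm a b c x y ≤ β * (topEigenvalue a b c ρ ρ' * (x ^ 2 / ρ + y ^ 2 / ρ')) :=
          mul_le_mul_of_nonneg_left (binForm_le_topEigenvalue_mul hρ hρ' x y) hβ
      _ ≤ μ * (x ^ 2 / ρ + y ^ 2 / ρ') := by
          rw [← mul_assoc]; exact mul_le_mul_of_nonneg_right h (by positivity)

theorem forall_ne_zero_mul_binForm_lt_iff (hρ : 0 < ρ) (hρ' : 0 < ρ') {β : ℝ} (hβ : 0 ≤ β)
    (μ : ℝ) :
    (∀ x y : ℝ, (x, y) ≠ (0, 0) → β * binForm a b c x y < μ * (x ^ 2 / ρ + y ^ 2 / ρ')) ↔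
      β * topEigenvalue a b c ρ ρ' < μ := by
  constructor
  · intro h
    obtain ⟨x, y, hxy, heq⟩ := exists_binForm_eq_topEigenvalue_mul a b c hρ hρ'
    have := h x y hxy
    rw [heq, ← mul_assoc] at this
    exact lt_of_mul_lt_mul_right this (sq_div_add_sq_div_pos hρ hρ' hxy).le
  · intro h x y hxy
    calc β * binForm a b c x y ≤ β * (topEigenvalue a b c ρ ρ' * (x ^ 2 / ρ + y ^ 2 / ρ')) :=
          mul_le_mul_of_nonneg_left (binForm_le_topEigenvalue_mul hρ hρ' x y) hβ
      _ < μ * (x ^ 2 / ρ + y ^ 2 / ρ') := by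
          rw [← mul_assoc]; exact mul_lt_mul_of_pos_right h (sq_div_add_sq_div_pos hρ hρ' hxy)

theorem threshold_eq_two_div_topEigenvalue (hρ : 0 < ρ) (hρ' : 0 < ρ')
    (hpos : 0 < topEigenvalue a b c ρ ρ') :
    (if a * b = c ^ 2 then 2 / (a * ρ + b * ρ')
      else (ρ * a + ρ' * b - √((ρ * a - ρ' * b) ^ 2 + 4 * ρ * ρ' * c ^ 2)) /
        (ρ * ρ' * (a * b - c ^ 2))) = 2 / topEigenvalue a b c ρ ρ' := by
  have hr := sq_sqrt_discr a b c hρ hρ'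
  have hr0 := sqrt_nonneg ((ρ * a - ρ' * b) ^ 2 + 4 * ρ * ρ' * c ^ 2)
  unfold topEigenvalue at hpos ⊢
  set r := √((ρ * a - ρ' * b) ^ 2 + 4 * ρ * ρ' * c ^ 2)
  split_ifs with hdeg
  · -- `r = |ρ a + ρ' b|`, and `0 < topEigenvalue` fixes the sign
    have hrs : r = ρ * a + ρ' * b := by
      have : (r - (ρ * a + ρ' * b)) * (r + (ρ * a + ρ' * b)) = 0 := by
        linear_combination hr - 4 * ρ * ρ' * hdeg
      linarith [(mul_eq_zero.1 this).resolve_right (by linarith)]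
    rw [hrs, show (ρ * a + ρ' * b + (ρ * a + ρ' * b)) / 2 = a * ρ + b * ρ' by ring]
  · have hk : ρ * ρ' * (a * b - c ^ 2) ≠ 0 :=
      mul_ne_zero (mul_pos hρ hρ').ne' (sub_ne_zero.2 hdeg)
    rw [div_eq_div_iff hk hpos.ne']
    linear_combination (-1 / 2 : ℝ) * hr

end topEigenvalue

theorem perturbation_lemma (a b c ρ ρ' β γ : ℝ)
    (hρ : 0 < ρ) (hρ' : 0 < ρ') (hβ : 0 < β)
    (hQ : ∃ x y : ℝ, 0 < (a * x ^ 2 + b * y ^ 2 + 2 * c * x * y) / 2)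
    (hγ : γ = if a * b = c ^ 2 then 2 / (a * ρ + b * ρ')
      else (ρ * a + ρ' * b - Real.sqrt ((ρ * a - ρ' * b) ^ 2 + 4 * ρ * ρ' * c ^ 2)) /
        (ρ * ρ' * (a * b - c ^ 2))) :
    ((∀ x y : ℝ,
        β * ((a * x ^ 2 + b * y ^ 2 + 2 * c * x * y) / 2) - x ^ 2 / ρ - y ^ 2 / ρ' ≤ 0) ↔
      β ≤ γ) ∧
    ((∀ x y : ℝ, (x, y) ≠ (0, 0) →
        β * ((a * x ^ 2 + b * y ^ 2 + 2 * c * x * y) / 2) - x ^ 2 / ρ - y ^ 2 / ρ' < 0) ↔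
      β < γ) := by
  obtain ⟨x₀, y₀, hQ₀⟩ := hQ
  have hpos : 0 < topEigenvalue a b c ρ ρ' :=
    topEigenvalue_pos hρ hρ' (x := x₀) (y := y₀) (by unfold binForm; linarith)
  have hle : ∀ x y : ℝ,
      β * ((a * x ^ 2 + b * y ^ 2 + 2 * c * x * y) / 2) - x ^ 2 / ρ - y ^ 2 / ρ' ≤ 0 ↔
        β * binForm a b c x y ≤ 2 * (x ^ 2 / ρ + y ^ 2 / ρ') := by
    intro x y; unfold binForm; constructor <;> intro h <;> linarith
  have hlt : ∀ x y : ℝ,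
      β * ((a * x ^ 2 + b * y ^ 2 + 2 * c * x * y) / 2) - x ^ 2 / ρ - y ^ 2 / ρ' < 0 ↔
        β * binForm a b c x y < 2 * (x ^ 2 / ρ + y ^ 2 / ρ') := by
    intro x y; unfold binForm; constructor <;> intro h <;> linarith
  simp only [hle, hlt]
  rw [hγ, threshold_eq_two_div_topEigenvalue hρ hρ' hpos, le_div_iff₀ hpos, lt_div_iff₀ hpos]
  exact ⟨forall_mul_binForm_le_iff hρ hρ' hβ.le 2, forall_ne_zero_mul_binForm_lt_iff hρ hρ' hβ.le 2⟩
end
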